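/- The number of antichains in the root poset of type A_{n-1} equals the Catalan number C_n. -/

import Mathlib

/-- Positive roots of type `A_{n-1}`: the root `e_i - e_j` is encoded by the pair `(i,j)`
with `i < j`. -/
def PosRoot (n : ℕ) : Type := {p : Fin n × Fin n // p.1 < p.2}

/-- The root poset order: `e_i - e_j ≤ e_{i'} - e_{j'}` iff the difference is a
nonnegative combination of simple roots, i.e. `i' ≤ i` and `j ≤ j'`. -/
def RootLE {n : ℕ} (α β : PosRoot n) : Prop :=
  β.1.1 ≤ α.1.1 ∧ α.1.2 ≤ β.1.2

/-!
In an antichain of the root poset the first and the second coordinates increase together, so the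
antichain is determined by the set `A` of its first coordinates and the set `B` of its second
coordinates: listing both increasingly, it pairs the `k`-th element of `A` with the `k`-th element
of `B`. Such a pairing consists of positive roots exactly when, for every `q`, `B` has at most as
many elements in `[0, q]` as `A` has in `[0, q)`. Reading `q = 0, …, n - 1` and writing a down or
up step according as `q ∈ B`, then an up or down step according as `q ∈ A`, turns this into the
ballot condition: after `2q` letters the word has height `2 (#(A ∩ [0, q)) - #(B ∩ [0, q)))`.
This is a bijection onto the Dyck words of semilength `n`, which are counted by `catalan n`.
-/

open Finset

section Rank

def rank (s : Finset ℕ) (x : ℕ) : ℕ := #{y ∈ s | y < x}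

variable {s : Finset ℕ}

theorem rank_mono (s : Finset ℕ) : Monotone (rank s) := fun _ _ hxy =>
  card_le_card (monotone_filter_right s fun _ _ hz => lt_of_lt_of_le hz hxy)

theorem rank_lt_rank {a b : ℕ} (ha : a ∈ s) (hab : a < b) : rank s a < rank s b := by
  refine card_lt_card ⟨monotone_filter_right s fun _ _ hz => hz.trans hab, fun h => ?_⟩
  simpa using h (mem_filter.mpr ⟨ha, hab⟩)

theorem rank_injOn : Set.InjOn (rank s) s := fun _ ha _ hb h =>
  le_antisymm (not_lt.mp fun hba => (rank_lt_rank hb hba).ne' h)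
    (not_lt.mp fun hab => (rank_lt_rank ha hab).ne h)

theorem rank_succ (x : ℕ) : rank s (x + 1) = rank s x + if x ∈ s then 1 else 0 := by
  have : {y ∈ s | y < x + 1} = {y ∈ s | y < x} ∪ {y ∈ s | y = x} := by
    ext y
    simp only [mem_filter, mem_union, Nat.lt_succ_iff_lt_or_eq, and_or_left]
  rw [rank, rank, this, card_union_of_disjoint (disjoint_filter.mpr fun _ _ h => h.ne),
    filter_eq']
  split_ifs <;> simp

theorem rank_eq_card {n x : ℕ} (hs : s ⊆ range n) (hx : n ≤ x) : rank s x = #s := by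
  rw [rank, filter_true_of_mem fun y hy => (mem_range.mp (hs hy)).trans_le hx]

theorem rank_lt_card {x : ℕ} (hx : x ∈ s) : rank s x < #s :=
  card_lt_card (filter_ssubset.mpr ⟨x, hx, lt_irrefl x⟩)

theorem exists_rank_eq {k : ℕ} (hk : k < #s) : ∃ x ∈ s, rank s x = k := by
  have : s.image (rank s) = range #s :=
    eq_of_subset_of_card_le (image_subset_iff.mpr fun _ hx => mem_range.mpr (rank_lt_card hx))
      (by rw [card_image_of_injOn rank_injOn, card_range])
  rw [← mem_range, ← this, mem_image] at hk
  exact hk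

end Rank

namespace PosRoot

variable {n : ℕ}

instance : Fintype (PosRoot n) := by unfold PosRoot; infer_instance

instance : DecidableEq (PosRoot n) := by unfold PosRoot; infer_instance

def fst (r : PosRoot n) : ℕ := r.1.1

def snd (r : PosRoot n) : ℕ := r.1.2

theorem fst_lt_snd (r : PosRoot n) : r.fst < r.snd := r.2

theorem snd_lt (r : PosRoot n) : r.snd < n := r.1.2.2

def mk {i j : ℕ} (hij : i < j) (hj : j < n) : PosRoot n :=
  ⟨(⟨i, hij.trans hj⟩, ⟨j, hj⟩), hij⟩

@[ext]
theorem ext {r s : PosRoot n} (h₁ : r.fst = s.fst) (h₂ : r.snd = s.snd) : r = s :=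
  Subtype.ext (Prod.ext (Fin.ext h₁) (Fin.ext h₂))

theorem rootLE_iff {r s : PosRoot n} : RootLE r s ↔ s.fst ≤ r.fst ∧ r.snd ≤ s.snd := Iff.rfl

variable {S : Finset (PosRoot n)}

theorem fst_lt_fst_iff_of_isAntichain (hS : IsAntichain RootLE (S : Set (PosRoot n)))
    {r s : PosRoot n} (hr : r ∈ S) (hs : s ∈ S) : r.fst < s.fst ↔ r.snd < s.snd := by
  constructor
  · intro h
    by_contra! h'
    exact hS hs hr (fun e => h.ne (congrArg fst e).symm) (rootLE_iff.mpr ⟨h.le, h'⟩)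
  · intro h
    by_contra! h'
    exact hS hr hs (fun e => h.ne (congrArg snd e)) (rootLE_iff.mpr ⟨h', h.le⟩)

theorem injOn_fst_of_isAntichain (hS : IsAntichain RootLE (S : Set (PosRoot n))) :
    Set.InjOn fst (S : Set (PosRoot n)) := fun r hr s hs h => by
  have := fst_lt_fst_iff_of_isAntichain hS hr hs
  have := fst_lt_fst_iff_of_isAntichain hS hs hr
  ext <;> omega

theorem injOn_snd_of_isAntichain (hS : IsAntichain RootLE (S : Set (PosRoot n))) :
    Set.InjOn snd (S : Set (PosRoot n)) := fun r hr s hs h => by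
  have := fst_lt_fst_iff_of_isAntichain hS hr hs
  have := fst_lt_fst_iff_of_isAntichain hS hs hr
  ext <;> omega

theorem rank_image_fst_eq_rank_image_snd (hS : IsAntichain RootLE (S : Set (PosRoot n)))
    {r : PosRoot n} (hr : r ∈ S) : rank (S.image fst) r.fst = rank (S.image snd) r.snd := by
  rw [rank, rank, filter_image, filter_image,
    card_image_of_injOn ((injOn_fst_of_isAntichain hS).mono (filter_subset _ _)),
    card_image_of_injOn ((injOn_snd_of_isAntichain hS).mono (filter_subset _ _))]
  congr 1
  exact filter_congr fun s hs => fst_lt_fst_iff_of_isAntichain hS hs hr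

end PosRoot

/-- The sets `A`, `B` of first and second coordinates of an antichain: the rank condition says
that the `k`-th element of `A` is smaller than the `k`-th element of `B`. -/
structure IsBallotPair (n : ℕ) (A B : Finset ℕ) : Prop where
  subset_left : A ⊆ range n
  subset_right : B ⊆ range n
  card_eq : #A = #B
  rank_succ_le : ∀ q, rank B (q + 1) ≤ rank A q

section BallotPair

open PosRoot

variable {n : ℕ} {A B : Finset ℕ}

theorem isBallotPair_image {S : Finset (PosRoot n)}
    (hS : IsAntichain RootLE (S : Set (PosRoot n))) :
    IsBallotPair n (S.image fst) (S.image snd) where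
  subset_left := image_subset_iff.mpr fun r _ => mem_range.mpr (r.fst_lt_snd.trans r.snd_lt)
  subset_right := image_subset_iff.mpr fun r _ => mem_range.mpr r.snd_lt
  card_eq := by
    rw [card_image_of_injOn (injOn_fst_of_isAntichain hS),
      card_image_of_injOn (injOn_snd_of_isAntichain hS)]
  rank_succ_le q := by
    set T := S.filter (·.snd < q + 1)
    calc rank (S.image snd) (q + 1) = #(T.image snd) := by rw [rank, filter_image]
      _ = #(T.image fst) := by
        rw [card_image_of_injOn ((injOn_snd_of_isAntichain hS).mono (filter_subset _ _)),
          card_image_of_injOn ((injOn_fst_of_isAntichain hS).mono (filter_subset _ _))]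
      _ ≤ rank (S.image fst) q := by
        rw [rank, filter_image]
        refine card_le_card (image_subset_image fun r hr => ?_)
        have := (mem_filter.mp hr).2
        have := r.fst_lt_snd
        exact mem_filter.mpr ⟨(mem_filter.mp hr).1, by omega⟩

theorem IsBallotPair.lt_of_rank_eq (h : IsBallotPair n A B) {a b : ℕ} (hb : b ∈ B)
    (hr : rank A a = rank B b) : a < b := by
  by_contra! hba
  have := h.rank_succ_le b
  have := rank_mono A hba
  rw [rank_succ, if_pos hb] at *
  omega

def rootsOfPair (n : ℕ) (A B : Finset ℕ) : Finset (PosRoot n) :=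
  {r | r.fst ∈ A ∧ r.snd ∈ B ∧ rank A r.fst = rank B r.snd}

theorem isAntichain_rootsOfPair (n : ℕ) (A B : Finset ℕ) :
    IsAntichain RootLE (rootsOfPair n A B : Set (PosRoot n)) := by
  intro r hr s hs hne hrs
  simp only [rootsOfPair, coe_filter, mem_univ, true_and, Set.mem_ofPred_eq] at hr hs
  obtain ⟨hfst, hsnd⟩ := rootLE_iff.mp hrs
  have h₁ := rank_mono A hfst
  have h₂ := rank_mono B hsnd
  refine hne (ext (rank_injOn hr.1 hs.1 ?_) (rank_injOn hr.2.1 hs.2.1 ?_)) <;> omega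

theorem IsBallotPair.exists_mem_rootsOfPair (h : IsBallotPair n A B) {a b : ℕ} (ha : a ∈ A)
    (hb : b ∈ B) (hr : rank A a = rank B b) :
    ∃ r ∈ rootsOfPair n A B, r.fst = a ∧ r.snd = b :=
  ⟨PosRoot.mk (h.lt_of_rank_eq hb hr) (mem_range.mp (h.subset_right hb)),
    by simpa [rootsOfPair] using ⟨ha, hb, hr⟩, rfl, rfl⟩

theorem IsBallotPair.image_fst_rootsOfPair (h : IsBallotPair n A B) :
    (rootsOfPair n A B).image fst = A := by
  refine Subset.antisymm (image_subset_iff.mpr fun r hr => (mem_filter.mp hr).2.1) fun a ha => ?_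
  obtain ⟨b, hb, hab⟩ := exists_rank_eq (h.card_eq ▸ rank_lt_card ha)
  obtain ⟨r, hr, rfl, -⟩ := h.exists_mem_rootsOfPair ha hb hab.symm
  exact mem_image_of_mem _ hr

theorem IsBallotPair.image_snd_rootsOfPair (h : IsBallotPair n A B) :
    (rootsOfPair n A B).image snd = B := by
  refine Subset.antisymm (image_subset_iff.mpr fun r hr => (mem_filter.mp hr).2.2.1) fun b hb => ?_
  obtain ⟨a, ha, hab⟩ := exists_rank_eq (h.card_eq.symm ▸ rank_lt_card hb)
  obtain ⟨r, hr, -, rfl⟩ := h.exists_mem_rootsOfPair ha hb hab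
  exact mem_image_of_mem _ hr

theorem rootsOfPair_image {S : Finset (PosRoot n)}
    (hS : IsAntichain RootLE (S : Set (PosRoot n))) :
    rootsOfPair n (S.image fst) (S.image snd) = S := by
  ext r
  simp only [rootsOfPair, mem_filter, mem_univ, true_and]
  refine ⟨fun ⟨ha, hb, hr⟩ => ?_, fun hr => ⟨mem_image_of_mem _ hr, mem_image_of_mem _ hr,
    rank_image_fst_eq_rank_image_snd hS hr⟩⟩
  obtain ⟨s, hs, hsr⟩ := mem_image.mp ha
  obtain ⟨t, ht, htr⟩ := mem_image.mp hb
  have hst : s.snd = t.snd := rank_injOn (mem_image_of_mem _ hs) (mem_image_of_mem _ ht) <| by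
    rw [← rank_image_fst_eq_rank_image_snd hS hs, hsr, hr, ← htr]
  obtain rfl : s = t := injOn_snd_of_isAntichain hS hs ht hst
  rwa [ext hsr.symm htr.symm]

end BallotPair

def BallotPair (n : ℕ) : Type := {p : Finset ℕ × Finset ℕ // IsBallotPair n p.1 p.2}

def antichainEquivBallotPair (n : ℕ) :
    {S : Finset (PosRoot n) // IsAntichain RootLE (S : Set (PosRoot n))} ≃ BallotPair n where
  toFun S := ⟨(S.1.image PosRoot.fst, S.1.image PosRoot.snd), isBallotPair_image S.2⟩
  invFun p := ⟨rootsOfPair n p.1.1 p.1.2, isAntichain_rootsOfPair n _ _⟩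
  left_inv S := Subtype.ext (rootsOfPair_image S.2)
  right_inv p := Subtype.ext (Prod.ext p.2.image_fst_rootsOfPair p.2.image_snd_rootsOfPair)

section BallotWord

open DyckStep

variable {n : ℕ} {A B : Finset ℕ}

def ballotWord (A B : Finset ℕ) (n : ℕ) : List DyckStep :=
  (List.range n).flatMap fun q => [if q ∈ B then D else U, if q ∈ A then U else D]

theorem ballotWord_succ (q : ℕ) : ballotWord A B (q + 1) =
    ballotWord A B q ++ [if q ∈ B then D else U, if q ∈ A then U else D] := by
  simp [ballotWord, List.range_succ]

theorem length_ballotWord (A B : Finset ℕ) (q : ℕ) : (ballotWord A B q).length = 2 * q := by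
  induction q with
  | zero => rfl
  | succ q ih => simp [ballotWord_succ, ih]; ring

theorem count_D_ballotWord (A B : Finset ℕ) (q : ℕ) :
    (ballotWord A B q).count D + rank A q = q + rank B q := by
  induction q with
  | zero => simp [ballotWord, rank]
  | succ q ih => rw [ballotWord_succ, rank_succ, rank_succ]; split_ifs <;> simp <;> omega

theorem count_U_ballotWord (A B : Finset ℕ) (q : ℕ) :
    (ballotWord A B q).count U + rank B q = q + rank A q := by
  induction q with
  | zero => simp [ballotWord, rank]
  | succ q ih => rw [ballotWord_succ, rank_succ, rank_succ]; split_ifs <;> simp <;> omega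

theorem ballotWord_prefix {q : ℕ} (hq : q ≤ n) : ballotWord A B q <+: ballotWord A B n := by
  induction n, hq using Nat.le_induction with
  | base => exact List.prefix_refl _
  | succ n _ ih => exact ih.trans (by rw [ballotWord_succ]; exact List.prefix_append _ _)

theorem take_ballotWord {q : ℕ} (hq : q ≤ n) :
    (ballotWord A B n).take (2 * q) = ballotWord A B q := by
  rw [← length_ballotWord A B q, ← List.prefix_iff_eq_take.mp (ballotWord_prefix hq)]

theorem getElem?_ballotWord_two_mul {q : ℕ} (hq : q < n) :
    (ballotWord A B n)[2 * q]? = some (if q ∈ B then D else U) := by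
  rw [List.prefix_iff_getElem?.mp (ballotWord_prefix hq) (2 * q)
    (by rw [length_ballotWord]; omega)]
  simp [ballotWord_succ, length_ballotWord]

theorem getElem?_ballotWord_two_mul_add_one {q : ℕ} (hq : q < n) :
    (ballotWord A B n)[2 * q + 1]? = some (if q ∈ A then U else D) := by
  rw [List.prefix_iff_getElem?.mp (ballotWord_prefix hq) (2 * q + 1)
    (by rw [length_ballotWord]; omega)]
  simp [ballotWord_succ, length_ballotWord]

theorem take_ballotWord_add_one {q : ℕ} (hq : q < n) :
    (ballotWord A B n).take (2 * q + 1) = ballotWord A B q ++ [if q ∈ B then D else U] := by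
  rw [List.take_add_one, take_ballotWord hq.le, getElem?_ballotWord_two_mul hq]
  rfl

theorem IsBallotPair.rank_le (h : IsBallotPair n A B) (q : ℕ) : rank B q ≤ rank A q := by
  cases q with
  | zero => simp [rank]
  | succ q => exact (h.rank_succ_le q).trans (rank_mono A q.le_succ)

theorem IsBallotPair.count_U_eq_count_D (h : IsBallotPair n A B) :
    (ballotWord A B n).count U = (ballotWord A B n).count D := by
  have := count_D_ballotWord A B n
  have := count_U_ballotWord A B n
  rw [rank_eq_card h.subset_left le_rfl, rank_eq_card h.subset_right le_rfl, h.card_eq] at *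
  omega

theorem IsBallotPair.count_D_le_count_U (h : IsBallotPair n A B) (i : ℕ) :
    ((ballotWord A B n).take i).count D ≤ ((ballotWord A B n).take i).count U := by
  obtain hi | hi := le_or_gt (2 * n) i
  · rw [List.take_of_length_le (by rwa [length_ballotWord])]
    exact h.count_U_eq_count_D.ge
  obtain ⟨q, rfl | rfl⟩ := Nat.even_or_odd' i
  · have := count_D_ballotWord A B q
    have := count_U_ballotWord A B q
    have := h.rank_le q
    rw [take_ballotWord (by omega)]
    omega
  · have := count_D_ballotWord A B q
    have := count_U_ballotWord A B q
    have := h.rank_le q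
    have := h.rank_succ_le q
    rw [take_ballotWord_add_one (by omega), List.count_append, List.count_append]
    rw [rank_succ] at this
    split_ifs at * <;> simp <;> omega

theorem isBallotPair_of_ballotWord (hA : A ⊆ range n) (hB : B ⊆ range n)
    (hUD : (ballotWord A B n).count U = (ballotWord A B n).count D)
    (hDU : ∀ i, ((ballotWord A B n).take i).count D ≤ ((ballotWord A B n).take i).count U) :
    IsBallotPair n A B := by
  have hcard : #A = #B := by
    have := count_D_ballotWord A B n
    have := count_U_ballotWord A B n
    rw [rank_eq_card hA le_rfl, rank_eq_card hB le_rfl] at *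
    omega
  refine ⟨hA, hB, hcard, fun q => ?_⟩
  obtain hq | hq := lt_or_ge q n
  · have := hDU (2 * q + 1)
    rw [take_ballotWord_add_one hq, List.count_append, List.count_append] at this
    have := count_D_ballotWord A B q
    have := count_U_ballotWord A B q
    rw [rank_succ]
    split_ifs at * <;> simp at * <;> omega
  · rw [rank_eq_card hB (by omega), rank_eq_card hA hq, hcard]

def IsBallotPair.toDyckWord (h : IsBallotPair n A B) : DyckWord where
  toList := ballotWord A B n
  count_U_eq_count_D := h.count_U_eq_count_D
  count_D_le_count_U := h.count_D_le_count_U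

theorem IsBallotPair.semilength_toDyckWord (h : IsBallotPair n A B) :
    h.toDyckWord.semilength = n := by
  have : 2 * h.toDyckWord.semilength = 2 * n :=
    h.toDyckWord.two_mul_semilength_eq_length.trans (length_ballotWord A B n)
  omega

end BallotWord

section Decode

open DyckStep

variable {n : ℕ}

def upSet (n : ℕ) (l : List DyckStep) : Finset ℕ := {q ∈ range n | l[2 * q + 1]? = some U}

def downSet (n : ℕ) (l : List DyckStep) : Finset ℕ := {q ∈ range n | l[2 * q]? = some D}

theorem upSet_ballotWord {A : Finset ℕ} (B : Finset ℕ) (hA : A ⊆ range n) :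
    upSet n (ballotWord A B n) = A := by
  ext q
  simp only [upSet, mem_filter, mem_range]
  constructor
  · rintro ⟨hq, h⟩
    simpa [getElem?_ballotWord_two_mul_add_one hq] using h
  · intro hq
    have hq' := mem_range.mp (hA hq)
    simp [getElem?_ballotWord_two_mul_add_one hq', hq, hq']

theorem downSet_ballotWord (A : Finset ℕ) {B : Finset ℕ} (hB : B ⊆ range n) :
    downSet n (ballotWord A B n) = B := by
  ext q
  simp only [downSet, mem_filter, mem_range]
  constructor
  · rintro ⟨hq, h⟩
    simpa [getElem?_ballotWord_two_mul hq] using h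
  · intro hq
    have hq' := mem_range.mp (hB hq)
    simp [getElem?_ballotWord_two_mul hq', hq, hq']

theorem ballotWord_upSet_downSet {l : List DyckStep} (hl : l.length = 2 * n) :
    ballotWord (upSet n l) (downSet n l) n = l := by
  refine List.ext_getElem? fun i => ?_
  obtain hi | hi := le_or_gt (2 * n) i
  · rw [List.getElem?_eq_none (by rwa [length_ballotWord]), List.getElem?_eq_none (by omega)]
  obtain ⟨q, rfl | rfl⟩ := Nat.even_or_odd' i
  · obtain ⟨x, hx⟩ : ∃ x, l[2 * q]? = some x := ⟨_, List.getElem?_eq_getElem (by omega)⟩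
    rw [getElem?_ballotWord_two_mul (by omega), hx]
    cases x <;> simp [downSet, hx, show q < n by omega]
  · obtain ⟨x, hx⟩ : ∃ x, l[2 * q + 1]? = some x :=
      ⟨_, List.getElem?_eq_getElem (by omega)⟩
    rw [getElem?_ballotWord_two_mul_add_one (by omega), hx]
    cases x <;> simp [upSet, hx, show q < n by omega]

end Decode

theorem DyckWord.length_toList_of_semilength_eq {w : DyckWord} {n : ℕ} (hw : w.semilength = n) :
    w.toList.length = 2 * n := by
  rw [← w.two_mul_semilength_eq_length, hw]

def ballotPairEquivDyckWord (n : ℕ) : BallotPair n ≃ {w : DyckWord // w.semilength = n} where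
  toFun p := ⟨p.2.toDyckWord, p.2.semilength_toDyckWord⟩
  invFun w :=
    have hl := DyckWord.length_toList_of_semilength_eq w.2
    ⟨(upSet n w.1.toList, downSet n w.1.toList),
      isBallotPair_of_ballotWord (filter_subset _ _) (filter_subset _ _)
        (by rw [ballotWord_upSet_downSet hl]; exact w.1.count_U_eq_count_D)
        (by rw [ballotWord_upSet_downSet hl]; exact w.1.count_D_le_count_U)⟩
  left_inv p := Subtype.ext <| Prod.ext (upSet_ballotWord _ p.2.subset_left)
    (downSet_ballotWord _ p.2.subset_right)
  right_inv w := Subtype.ext <| DyckWord.ext <| ballotWord_upSet_downSet <|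
    DyckWord.length_toList_of_semilength_eq w.2

/-- The number of antichains in the root poset of type `A_{n-1}` equals the Catalan
number `C n`. -/
theorem antichains_root_poset_count (n : ℕ) :
    Nat.card {S : Set (PosRoot n) // IsAntichain RootLE S} = catalan n := by
  have toFinset : {S : Set (PosRoot n) // IsAntichain RootLE S} ≃
      {S : Finset (PosRoot n) // IsAntichain RootLE (S : Set (PosRoot n))} :=
    (Equiv.subtypeEquiv Fintype.finsetEquivSet fun _ => Iff.rfl).symm
  rw [Nat.card_congr ((toFinset.trans (antichainEquivBallotPair n)).trans
    (ballotPairEquivDyckWord n)), Nat.card_eq_fintype_card,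
    DyckWord.card_dyckWord_semilength_eq_catalan]
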